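/- Let 0 < a < b and y ≥ 1. Then b^(b-1)(a+y-1)^(a+y-1) / (a^(a-1)(b+y-1)^(b+y-1)) ≤ B(b,y)/B(a,y) ≤ a(b+1)^(b+1)(a+y)^(a+y) / (b(a+1)^(a+1)(b+y)^(b+y)). -/

import Mathlib

/-!
Since B(x, y) = Γ(x)Γ(y)/Γ(x + y), the ratio is Γ(b)Γ(a + y)/(Γ(a)Γ(b + y)). In logarithmic form the
lower bound says that z ↦ log Γ(z) - log Γ(z + w) - ((z - 1) log z - (z + w - 1) log (z + w - 1))
increases for w = y ≥ 1, and the upper bound (after Γ(z + 1) = z Γ(z), at z = a + 1, b + 1) that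
z ↦ log Γ(z) - log Γ(z + w) - (z log z - (z + w) log (z + w)) decreases for w = y - 1 ≥ 0.
Both are checked on Gauss's approximants z log n + log n! - ∑_{m ≤ n} log (z + m) of log Γ(z), for
which log Γ(z) - log Γ(z + w) has derivative ∑_{m ≤ n} (1/(z + w + m) - 1/(z + m)). This sum is
compared with a telescoping sum, term by term, using that log (1 + 1/s) - 1/s increases and
log (1 + 1/s) - 1/(s + 1) decreases; in the upper bound an error w/(n + 1) remains, which vanishes
as n → ∞.
-/

open Real MeasureTheory intervalIntegral

noncomputable def B (x y : ℝ) : ℝ := ∫ t in (0:ℝ)..1, t ^ (x - 1) * (1 - t) ^ (y - 1)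

open Filter Topology Finset Set Real.BohrMollerup

theorem B_eq_Gamma_mul_Gamma_div {x y : ℝ} (hx : 0 < x) (hy : 0 < y) :
    B x y = Gamma x * Gamma y / Gamma (x + y) := by
  have hB : (B x y : ℂ) = Complex.betaIntegral x y := by
    rw [B, Complex.betaIntegral, ← intervalIntegral.integral_ofReal]
    refine intervalIntegral.integral_congr fun t ht ↦ ?_
    rw [Set.uIcc_of_le zero_le_one] at ht
    push_cast
    rw [Complex.ofReal_cpow ht.1, Complex.ofReal_cpow (by linarith [ht.2])]
    push_cast
    ring_nf
  have h := Complex.Gamma_mul_Gamma_eq_betaIntegral (s := x) (t := y)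
    (by simpa using hx) (by simpa using hy)
  rw [← hB, ← Complex.ofReal_add, Complex.Gamma_ofReal, Complex.Gamma_ofReal,
    Complex.Gamma_ofReal] at h
  rw [eq_div_iff (Gamma_pos_of_pos (add_pos hx hy)).ne', mul_comm]
  exact_mod_cast h.symm

lemma B_div_B_eq {a b y : ℝ} (ha : 0 < a) (hb : 0 < b) (hy : 0 < y) :
    B b y / B a y = Gamma b * Gamma (a + y) / (Gamma a * Gamma (b + y)) := by
  rw [B_eq_Gamma_mul_Gamma_div hb hy, B_eq_Gamma_mul_Gamma_div ha hy]
  have := Gamma_pos_of_pos hy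
  field_simp

lemma monotoneOn_Ioi_of_hasDerivAt_nonneg {f f' : ℝ → ℝ} {c : ℝ}
    (hf : ∀ x ∈ Ioi c, HasDerivAt f (f' x) x) (hf' : ∀ x ∈ Ioi c, 0 ≤ f' x) :
    MonotoneOn f (Ioi c) :=
  monotoneOn_of_hasDerivWithinAt_nonneg (convex_Ioi c)
    (fun x hx ↦ (hf x hx).continuousAt.continuousWithinAt)
    (by simpa only [interior_Ioi] using fun x hx ↦ (hf x hx).hasDerivWithinAt)
    (by simpa only [interior_Ioi] using hf')

lemma antitoneOn_Ioi_of_hasDerivAt_nonpos {f f' : ℝ → ℝ} {c : ℝ}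
    (hf : ∀ x ∈ Ioi c, HasDerivAt f (f' x) x) (hf' : ∀ x ∈ Ioi c, f' x ≤ 0) :
    AntitoneOn f (Ioi c) :=
  antitoneOn_of_hasDerivWithinAt_nonpos (convex_Ioi c)
    (fun x hx ↦ (hf x hx).continuousAt.continuousWithinAt)
    (by simpa only [interior_Ioi] using fun x hx ↦ (hf x hx).hasDerivWithinAt)
    (by simpa only [interior_Ioi] using hf')

lemma hasDerivAt_log_add_one_sub_log {x : ℝ} (hx : 0 < x) :
    HasDerivAt (fun s ↦ log (s + 1) - log s) ((x + 1)⁻¹ - x⁻¹) x := by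
  have h1 := ((hasDerivAt_id x).add_const 1).log (by positivity)
  have h2 := (hasDerivAt_id x).log hx.ne'
  simpa [one_div] using h1.fun_sub h2

lemma monotoneOn_log_add_one_sub_log_sub_inv :
    MonotoneOn (fun s ↦ log (s + 1) - log s - s⁻¹) (Ioi 0) := by
  refine monotoneOn_Ioi_of_hasDerivAt_nonneg
    (fun x hx ↦ (hasDerivAt_log_add_one_sub_log hx).sub (hasDerivAt_inv (ne_of_gt hx))) ?_
  intro x (hx : 0 < x)
  have : (x + 1)⁻¹ - x⁻¹ - -(x ^ 2)⁻¹ = (x ^ 2 * (x + 1))⁻¹ := by field_simp; ring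
  rw [this]
  positivity

lemma antitoneOn_log_add_one_sub_log_sub_inv_add_one :
    AntitoneOn (fun s ↦ log (s + 1) - log s - (s + 1)⁻¹) (Ioi 0) := by
  refine antitoneOn_Ioi_of_hasDerivAt_nonpos (fun x hx ↦ (hasDerivAt_log_add_one_sub_log hx).sub
    ((hasDerivAt_inv (by linarith [mem_Ioi.mp hx] : x + 1 ≠ 0)).comp_add_const x 1)) ?_
  intro x (hx : 0 < x)
  have : (x + 1)⁻¹ - x⁻¹ - -((x + 1) ^ 2)⁻¹ = -(x * (x + 1) ^ 2)⁻¹ := by field_simp; ring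
  rw [this, neg_nonpos]
  positivity

lemma log_sub_log_sub_inv_le_sum_inv_sub_inv {z w : ℝ} (hz : 0 < z) (hw : 1 ≤ w) (n : ℕ) :
    log z - log (z + w - 1) - z⁻¹ ≤ ∑ m ∈ range (n + 1), ((z + w + m)⁻¹ - (z + m)⁻¹) := by
  set f : ℕ → ℝ := fun m ↦ log (z + m) - log (z + w - 1 + m) - (z + m)⁻¹
  have hstep : ∀ m ∈ range (n + 1), f m - f (m + 1) ≤ (z + w + m)⁻¹ - (z + m)⁻¹ := by
    intro m _
    have hm : (0 : ℝ) ≤ m := m.cast_nonneg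
    have h := antitoneOn_log_add_one_sub_log_sub_inv_add_one (a := z + m) (b := z + w - 1 + m)
      (by positivity : 0 < z + m) (by linarith : 0 < z + w - 1 + m) (by linarith)
    simp only [f, Nat.cast_add_one]
    ring_nf at h ⊢
    linarith
  have hlast : f (n + 1) ≤ 0 := by
    have : log (z + (n + 1 : ℕ)) ≤ log (z + w - 1 + (n + 1 : ℕ)) :=
      log_le_log (by positivity) (by linarith)
    have : 0 < (z + (n + 1 : ℕ))⁻¹ := by positivity
    simp only [f]
    linarith
  calc log z - log (z + w - 1) - z⁻¹ = f 0 := by simp [f]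
    _ ≤ f 0 - f (n + 1) := by linarith
    _ = ∑ m ∈ range (n + 1), (f m - f (m + 1)) := (sum_range_sub' f (n + 1)).symm
    _ ≤ _ := sum_le_sum hstep

lemma sum_inv_sub_inv_le_log_sub_log_add {z w : ℝ} (hz : 0 < z) (hw : 0 ≤ w) (n : ℕ) :
    ∑ m ∈ range (n + 1), ((z + w + m)⁻¹ - (z + m)⁻¹) ≤ log z - log (z + w) + w / (n + 1) := by
  set g : ℕ → ℝ := fun m ↦ log (z + w + m) - log (z + m)
  have hstep : ∀ m ∈ range (n + 1), (z + w + m)⁻¹ - (z + m)⁻¹ ≤ g (m + 1) - g m := by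
    intro m _
    have h := monotoneOn_log_add_one_sub_log_sub_inv (a := z + m) (b := z + w + m)
      (by positivity : 0 < z + m) (by positivity : 0 < z + w + m) (by linarith)
    simp only [g, Nat.cast_add_one]
    ring_nf at h ⊢
    linarith
  have hlast : g (n + 1) ≤ w / (n + 1) := by
    have hn : (0 : ℝ) < n + 1 := by positivity
    have hpos : 0 < z + (n + 1 : ℕ) := by positivity
    calc g (n + 1) = log ((z + w + (n + 1 : ℕ)) / (z + (n + 1 : ℕ))) := by
          rw [log_div (by positivity) hpos.ne']
      _ ≤ (z + w + (n + 1 : ℕ)) / (z + (n + 1 : ℕ)) - 1 := log_le_sub_one_of_pos (by positivity)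
      _ = w / (z + (n + 1 : ℕ)) := by field_simp; ring
      _ ≤ w / (n + 1) := div_le_div_of_nonneg_left hw hn (by push_cast; linarith)
  calc ∑ m ∈ range (n + 1), ((z + w + m)⁻¹ - (z + m)⁻¹)
      ≤ ∑ m ∈ range (n + 1), (g (m + 1) - g m) := sum_le_sum hstep
    _ = g (n + 1) - g 0 := sum_range_sub g (n + 1)
    _ ≤ log z - log (z + w) + w / (n + 1) := by
      simp only [g, CharP.cast_eq_zero, add_zero]
      linarith

lemma hasDerivAt_logGammaSeq {x : ℝ} (hx : 0 < x) (n : ℕ) :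
    HasDerivAt (logGammaSeq · n) (log n - ∑ m ∈ range (n + 1), (x + m)⁻¹) x := by
  have hsum : HasDerivAt (fun x ↦ ∑ m ∈ range (n + 1), log (x + m))
      (∑ m ∈ range (n + 1), (x + m)⁻¹) x :=
    HasDerivAt.fun_sum fun m _ ↦ by
      simpa [one_div] using ((hasDerivAt_id x).add_const (m : ℝ)).log (by positivity)
  simpa [logGammaSeq] using (((hasDerivAt_id x).mul_const (log n)).add_const _).fun_sub hsum

lemma hasDerivAt_logGammaSeq_sub_logGammaSeq_add {x w : ℝ} (hx : 0 < x) (hxw : 0 < x + w)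
    (n : ℕ) :
    HasDerivAt (fun z ↦ logGammaSeq z n - logGammaSeq (z + w) n)
      (∑ m ∈ range (n + 1), ((x + w + m)⁻¹ - (x + m)⁻¹)) x := by
  have h := (hasDerivAt_logGammaSeq hx n).fun_sub
    ((hasDerivAt_logGammaSeq hxw n).comp_add_const x w)
  refine h.congr_deriv ?_
  rw [sum_sub_distrib]
  ring

lemma hasDerivAt_mul_log_add {x c : ℝ} (hxc : 0 < x + c) :
    HasDerivAt (fun z ↦ (z + c) * log (z + c)) (log (x + c) + 1) x :=
  (hasDerivAt_mul_log hxc.ne').comp_add_const x c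

lemma monotoneOn_logGammaSeq_sub_logGammaSeq_add {w : ℝ} (hw : 1 ≤ w) (n : ℕ) :
    MonotoneOn (fun z ↦ logGammaSeq z n - logGammaSeq (z + w) n
      - ((z - 1) * log z - (z + w - 1) * log (z + w - 1))) (Ioi 0) := by
  refine monotoneOn_Ioi_of_hasDerivAt_nonneg (f' := fun x ↦
    ∑ m ∈ range (n + 1), ((x + w + m)⁻¹ - (x + m)⁻¹) - (log x + 1 - x⁻¹ - (log (x + w - 1) + 1)))
    (fun x (hx : 0 < x) ↦ ?_) (fun x (hx : 0 < x) ↦ ?_)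
  · have h1 : HasDerivAt (fun z ↦ (z - 1) * log z) (log x + 1 - x⁻¹) x :=
      (((hasDerivAt_id' x).sub_const 1).mul (hasDerivAt_log hx.ne')).congr_deriv
        (by field_simp; ring)
    have h2 := hasDerivAt_mul_log_add (c := w - 1) (by linarith : 0 < x + (w - 1))
    simp only [← add_sub_assoc] at h2
    exact (hasDerivAt_logGammaSeq_sub_logGammaSeq_add hx (by linarith) n).sub (h1.sub h2)
  · have := log_sub_log_sub_inv_le_sum_inv_sub_inv hx hw n
    linarith

lemma antitoneOn_logGammaSeq_sub_logGammaSeq_add {w : ℝ} (hw : 0 ≤ w) (n : ℕ) :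
    AntitoneOn (fun z ↦ logGammaSeq z n - logGammaSeq (z + w) n
      - (z * log z - (z + w) * log (z + w)) - w / (n + 1) * z) (Ioi 0) := by
  refine antitoneOn_Ioi_of_hasDerivAt_nonpos (f' := fun x ↦
    ∑ m ∈ range (n + 1), ((x + w + m)⁻¹ - (x + m)⁻¹) - (log x + 1 - (log (x + w) + 1))
      - w / (n + 1) * 1) (fun x (hx : 0 < x) ↦ ?_) (fun x (hx : 0 < x) ↦ ?_)
  · exact (((hasDerivAt_logGammaSeq_sub_logGammaSeq_add hx (by positivity) n).sub
      ((hasDerivAt_mul_log hx.ne').sub (hasDerivAt_mul_log_add (by positivity)))).sub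
      ((hasDerivAt_id' x).const_mul _))
  · have := sum_inv_sub_inv_le_log_sub_log_add hx hw n
    linarith

lemma tendsto_logGammaSeq_sub_logGammaSeq_add {z w : ℝ} (hz : 0 < z) (hzw : 0 < z + w) :
    Tendsto (fun n ↦ logGammaSeq z n - logGammaSeq (z + w) n) atTop
      (𝓝 (log (Gamma z) - log (Gamma (z + w)))) :=
  (tendsto_log_gamma hz).sub (tendsto_log_gamma hzw)

lemma monotoneOn_log_Gamma_sub_log_Gamma_add {w : ℝ} (hw : 1 ≤ w) :
    MonotoneOn (fun z ↦ log (Gamma z) - log (Gamma (z + w))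
      - ((z - 1) * log z - (z + w - 1) * log (z + w - 1))) (Ioi 0) := by
  intro a (ha : 0 < a) b (hb : 0 < b) hab
  exact le_of_tendsto_of_tendsto'
    ((tendsto_logGammaSeq_sub_logGammaSeq_add ha (by linarith)).sub_const _)
    ((tendsto_logGammaSeq_sub_logGammaSeq_add hb (by linarith)).sub_const _)
    fun n ↦ monotoneOn_logGammaSeq_sub_logGammaSeq_add hw n ha hb hab

lemma antitoneOn_log_Gamma_sub_log_Gamma_add {w : ℝ} (hw : 0 ≤ w) :
    AntitoneOn (fun z ↦ log (Gamma z) - log (Gamma (z + w))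
      - (z * log z - (z + w) * log (z + w))) (Ioi 0) := by
  intro a (ha : 0 < a) b (hb : 0 < b) hab
  have hε := tendsto_one_div_add_atTop_nhds_zero_nat.const_mul (w * (b - a))
  have ha_lim := ((tendsto_logGammaSeq_sub_logGammaSeq_add (w := w) ha (by linarith)).sub_const
    (a * log a - (a + w) * log (a + w))).add hε
  rw [mul_zero, add_zero] at ha_lim
  refine le_of_tendsto_of_tendsto'
    ((tendsto_logGammaSeq_sub_logGammaSeq_add (w := w) hb (by linarith)).sub_const _) ha_lim
    fun n ↦ ?_
  have := antitoneOn_logGammaSeq_sub_logGammaSeq_add hw n ha hb hab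
  simp only at this
  have : w * (b - a) * (1 / ((n : ℝ) + 1)) = w / (n + 1) * b - w / (n + 1) * a := by ring
  linarith

lemma rpow_mul_rpow_div_le_Gamma_ratio {a b w : ℝ} (ha : 0 < a) (hab : a ≤ b) (hw : 1 ≤ w) :
    b ^ (b - 1) * (a + w - 1) ^ (a + w - 1) / (a ^ (a - 1) * (b + w - 1) ^ (b + w - 1)) ≤
      Gamma b * Gamma (a + w) / (Gamma a * Gamma (b + w)) := by
  have hb : 0 < b := ha.trans_le hab
  have haw : 0 < a + w - 1 := by linarith
  have hbw : 0 < b + w - 1 := by linarith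
  have h := monotoneOn_log_Gamma_sub_log_Gamma_add hw ha hb hab
  simp only at h
  rw [← log_le_log_iff (by positivity) (by positivity), log_div (by positivity) (by positivity),
    log_div (by positivity) (by positivity), log_mul (by positivity) (by positivity),
    log_mul (by positivity) (by positivity), log_mul (by positivity) (by positivity),
    log_mul (by positivity) (by positivity), log_rpow hb, log_rpow haw, log_rpow ha, log_rpow hbw]
  linarith

lemma Gamma_ratio_le_rpow_mul_rpow_div {a b w : ℝ} (ha : 0 < a) (hab : a ≤ b) (hw : 0 ≤ w) :
    Gamma b * Gamma (a + w) / (Gamma a * Gamma (b + w)) ≤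
      b ^ b * (a + w) ^ (a + w) / (a ^ a * (b + w) ^ (b + w)) := by
  have hb : 0 < b := ha.trans_le hab
  have haw : 0 < a + w := by linarith
  have hbw : 0 < b + w := by linarith
  have h := antitoneOn_log_Gamma_sub_log_Gamma_add hw ha hb hab
  simp only at h
  rw [← log_le_log_iff (by positivity) (by positivity), log_div (by positivity) (by positivity),
    log_div (by positivity) (by positivity), log_mul (by positivity) (by positivity),
    log_mul (by positivity) (by positivity), log_mul (by positivity) (by positivity),
    log_mul (by positivity) (by positivity), log_rpow hb, log_rpow haw, log_rpow ha, log_rpow hbw]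
  linarith

theorem stmt5 (a b y : ℝ) (ha : 0 < a) (hab : a < b) (hy : 1 ≤ y) :
    b ^ (b - 1) * (a + y - 1) ^ (a + y - 1) / (a ^ (a - 1) * (b + y - 1) ^ (b + y - 1)) ≤
        B b y / B a y ∧
      B b y / B a y ≤
        a * (b + 1) ^ (b + 1) * (a + y) ^ (a + y) /
          (b * (a + 1) ^ (a + 1) * (b + y) ^ (b + y)) := by
  have hb : 0 < b := ha.trans hab
  rw [B_div_B_eq ha hb (by linarith)]
  refine ⟨rpow_mul_rpow_div_le_Gamma_ratio ha hab.le hy, ?_⟩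
  have h := Gamma_ratio_le_rpow_mul_rpow_div (by linarith : 0 < a + 1)
    (by linarith : a + 1 ≤ b + 1) (by linarith : 0 ≤ y - 1)
  rw [show a + 1 + (y - 1) = a + y by ring, show b + 1 + (y - 1) = b + y by ring,
    Gamma_add_one hb.ne', Gamma_add_one ha.ne'] at h
  calc Gamma b * Gamma (a + y) / (Gamma a * Gamma (b + y))
      = a / b * (b * Gamma b * Gamma (a + y) / (a * Gamma a * Gamma (b + y))) := by
        field_simp
    _ ≤ a / b * ((b + 1) ^ (b + 1) * (a + y) ^ (a + y) /
          ((a + 1) ^ (a + 1) * (b + y) ^ (b + y))) := by gcongr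
    _ = _ := by field_simp
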